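/- arXiv:2005.02752 — 2 statements merged into one kernel-verified Lean document; each statement's English description precedes it below -/
import Mathlib

section
/- In any swap equilibrium of a 2-type Swap Schelling Game on a path with n > 3 vertices and at least two agents of each color, every agent has strictly positive utility. -/
open SimpleGraph Finset
open scoped Classical

noncomputable def ssgUtil {V A : Type*} [Fintype V] [DecidableEq V]
    (G : SimpleGraph V) [DecidableRel G.Adj]
    {k : ℕ} (c : A → Fin k) (σ : A ≃ V) (i : A) : ℚ :=
  (((G.neighborFinset (σ i)).filter (fun v => c (σ.symm v) = c i)).card : ℚ) /
    (G.degree (σ i) : ℚ)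

def ssgSwap {V A : Type*} [DecidableEq V] (σ : A ≃ V) (i j : A) : A ≃ V :=
  σ.trans (Equiv.swap (σ i) (σ j))

def ssgProfitable {V A : Type*} [Fintype V] [DecidableEq V]
    (G : SimpleGraph V) [DecidableRel G.Adj]
    {k : ℕ} (c : A → Fin k) (σ : A ≃ V) (i j : A) : Prop :=
  c i ≠ c j ∧
    ssgUtil G c σ i < ssgUtil G c (ssgSwap σ i j) i ∧
    ssgUtil G c σ j < ssgUtil G c (ssgSwap σ i j) j

def ssgEquilibrium {V A : Type*} [Fintype V] [DecidableEq V]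
    (G : SimpleGraph V) [DecidableRel G.Adj]
    {k : ℕ} (c : A → Fin k) (σ : A ≃ V) : Prop :=
  ∀ i j : A, ¬ ssgProfitable G c σ i j

def ssgLocalEquilibrium {V A : Type*} [Fintype V] [DecidableEq V]
    (G : SimpleGraph V) [DecidableRel G.Adj]
    {k : ℕ} (c : A → Fin k) (σ : A ≃ V) : Prop :=
  ∀ i j : A, G.Adj (σ i) (σ j) → ¬ ssgProfitable G c σ i j

noncomputable def ssgWelfare {V A : Type*} [Fintype V] [DecidableEq V] [Fintype A]
    (G : SimpleGraph V) [DecidableRel G.Adj]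
    {k : ℕ} (c : A → Fin k) (σ : A ≃ V) : ℚ :=
  ∑ i : A, ssgUtil G c σ i

noncomputable def ssgPhi {V A : Type*} [Fintype V] [DecidableEq V]
    (G : SimpleGraph V) [DecidableRel G.Adj]
    {k : ℕ} (c : A → Fin k) (σ : A ≃ V) : ℕ :=
  (G.edgeFinset.filter (fun e => ∀ u ∈ e, ∀ v ∈ e, c (σ.symm u) = c (σ.symm v))).card


noncomputable instance (n : ℕ) : DecidableRel (SimpleGraph.pathGraph n).Adj :=
  Classical.decRel _

-- basic utility lemmas
section UtilLemmas
variable {V A : Type*} [Fintype V] [DecidableEq V]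
    (G : SimpleGraph V) [DecidableRel G.Adj]
    {k : ℕ} (c : A → Fin k) (σ : A ≃ V) (i : A)

lemma util_eq_zero (h : ∀ z ∈ G.neighborFinset (σ i), c (σ.symm z) ≠ c i) :
    ssgUtil G c σ i = 0 := by
  unfold ssgUtil
  rw [Finset.filter_false_of_mem h]
  simp

lemma util_pos (hd : 0 < G.degree (σ i))
    (h : ∃ z ∈ G.neighborFinset (σ i), c (σ.symm z) = c i) :
    0 < ssgUtil G c σ i := by
  unfold ssgUtil
  apply div_pos
  · obtain ⟨z, hz, hcz⟩ := h
    have : 0 < ((G.neighborFinset (σ i)).filter (fun v => c (σ.symm v) = c i)).card :=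
      Finset.card_pos.2 ⟨z, Finset.mem_filter.2 ⟨hz, hcz⟩⟩
    exact_mod_cast this
  · exact_mod_cast hd

lemma util_lt_one (h : ∃ z ∈ G.neighborFinset (σ i), c (σ.symm z) ≠ c i) :
    ssgUtil G c σ i < 1 := by
  obtain ⟨z, hz, hcz⟩ := h
  have hd : 0 < G.degree (σ i) := by
    rw [← SimpleGraph.card_neighborFinset_eq_degree]
    exact Finset.card_pos.2 ⟨z, hz⟩
  have hlt : ((G.neighborFinset (σ i)).filter (fun v => c (σ.symm v) = c i)).card
      < G.degree (σ i) := by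
    rw [← SimpleGraph.card_neighborFinset_eq_degree]
    apply Finset.card_lt_card
    constructor
    · exact Finset.filter_subset _ _
    · intro hsub
      have := Finset.mem_filter.1 (hsub hz)
      exact hcz this.2
  unfold ssgUtil
  rw [div_lt_one (by exact_mod_cast hd)]
  exact_mod_cast hlt

lemma util_eq_one (hd : 0 < G.degree (σ i))
    (h : ∀ z ∈ G.neighborFinset (σ i), c (σ.symm z) = c i) :
    ssgUtil G c σ i = 1 := by
  unfold ssgUtil
  rw [Finset.filter_true_of_mem h, SimpleGraph.card_neighborFinset_eq_degree]
  exact div_self (by positivity)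

end UtilLemmas

-- path graph facts
lemma path_deg_pos {n : ℕ} (hn : 2 ≤ n) (v : Fin n) :
    0 < (SimpleGraph.pathGraph n).degree v := by
  rw [← SimpleGraph.card_neighborFinset_eq_degree]
  apply Finset.card_pos.2
  rcases lt_or_ge (v.val + 1) n with h | h
  · exact ⟨⟨v.val + 1, h⟩, by
      rw [SimpleGraph.mem_neighborFinset, SimpleGraph.pathGraph_adj]; left; rfl⟩
  · have hv1 : 1 ≤ v.val := by omega
    exact ⟨⟨v.val - 1, by omega⟩, by
      rw [SimpleGraph.mem_neighborFinset, SimpleGraph.pathGraph_adj]; right; simp; omega⟩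

lemma path_nbhd_sub {n : ℕ} {w t v x : Fin n} (hv : (SimpleGraph.pathGraph n).Adj w v)
    (hx : (SimpleGraph.pathGraph n).Adj w x) (hvx : v ≠ x)
    (ht : (SimpleGraph.pathGraph n).Adj w t) : t = v ∨ t = x := by
  rw [SimpleGraph.pathGraph_adj] at hv hx ht
  have : v.val ≠ x.val := fun h => hvx (Fin.ext h)
  rcases ht with h | h <;> [skip; skip] <;>
  · rcases hv with h1 | h1 <;> rcases hx with h2 | h2 <;>
    first
      | (left; exact Fin.ext (by omega))
      | (right; exact Fin.ext (by omega))

-- swap facts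
section SwapFacts
variable {V A : Type*} [DecidableEq V] (σ : A ≃ V) (i j : A)

lemma ssgSwap_apply_i : ssgSwap σ i j i = σ j := by
  simp [ssgSwap, Equiv.swap_apply_left]

lemma ssgSwap_apply_j : ssgSwap σ i j j = σ i := by
  simp [ssgSwap, Equiv.swap_apply_right]

lemma ssgSwap_symm_apply (z : V) (hzi : z ≠ σ i) (hzj : z ≠ σ j) :
    (ssgSwap σ i j).symm z = σ.symm z := by
  simp [ssgSwap, Equiv.symm_trans_apply, Equiv.symm_swap,
    Equiv.swap_apply_of_ne_of_ne hzi hzj]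

end SwapFacts

-- Fin 2 helpers
lemma fin2_opp {a x y : Fin 2} (hxy : x ≠ y) (ha : a ≠ x) : a = y := by omega
lemma fin2_eq_of_ne {a b x : Fin 2} (ha : a ≠ x) (hb : b ≠ x) : a = b := by omega

section GameLemmas
variable {n : ℕ} (c : Fin n → Fin 2) (σ : Fin n ≃ Fin n)

/-- L1: distant swap. -/
lemma swapL1 (hn : 2 ≤ n) (i : Fin n)
    (hzero : ∀ z, (SimpleGraph.pathGraph n).Adj (σ i) z → c (σ.symm z) ≠ c i)
    (w u : Fin n)
    (hwc : c (σ.symm w) ≠ c i)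
    (hnadj : ¬ (SimpleGraph.pathGraph n).Adj (σ i) w)
    (hadj : (SimpleGraph.pathGraph n).Adj w u) (huc : c (σ.symm u) = c i)
    (huv : u ≠ σ i) :
    ssgProfitable (SimpleGraph.pathGraph n) c σ i (σ.symm w) := by
  set G := SimpleGraph.pathGraph n with hG
  set j := σ.symm w with hj
  have hσj : σ j = w := σ.apply_symm_apply w
  have hcij : c i ≠ c j := fun h => hwc h.symm
  have hvw : σ i ≠ w := fun h => hwc (by rw [hj, ← h, Equiv.symm_apply_apply])
  have huw : u ≠ w := fun h => G.ne_of_adj hadj h.symm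
  refine ⟨hcij, ?_, ?_⟩
  · -- i improves: old = 0, new > 0
    have hold : ssgUtil G c σ i = 0 :=
      util_eq_zero G c σ i (fun z hz => hzero z (G.mem_neighborFinset _ _ |>.1 hz))
    rw [hold]
    set σ' := ssgSwap σ i j with hσ'
    have hσ'i : σ' i = w := by rw [hσ', ssgSwap_apply_i, hσj]
    apply util_pos
    · rw [hσ'i]; exact path_deg_pos hn w
    · refine ⟨u, ?_, ?_⟩
      · rw [hσ'i, SimpleGraph.mem_neighborFinset]; exact hadj
      · have : σ'.symm u = σ.symm u := ssgSwap_symm_apply σ i j u huv (by rw [hσj]; exact huw)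
        rw [this, huc]
  · -- j improves: old < 1 = new
    have hnew : ssgUtil G c (ssgSwap σ i j) j = 1 := by
      set σ' := ssgSwap σ i j with hσ'
      have hσ'j : σ' j = σ i := by rw [hσ', ssgSwap_apply_j]
      apply util_eq_one
      · rw [hσ'j]; exact path_deg_pos hn (σ i)
      · intro z hz
        rw [hσ'j, SimpleGraph.mem_neighborFinset] at hz
        have hzv : z ≠ σ i := (G.ne_of_adj hz).symm
        have hzw : z ≠ σ j := by rw [hσj]; exact fun h => hnadj (h ▸ hz)
        rw [ssgSwap_symm_apply σ i j z hzv hzw]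
        exact fin2_eq_of_ne (hzero z hz) hcij.symm
    rw [hnew]
    apply util_lt_one
    refine ⟨u, ?_, ?_⟩
    · rw [hσj, SimpleGraph.mem_neighborFinset]; exact hadj
    · rw [huc]; exact hcij

/-- L3: adjacent swap. `i` has utility 0 at `v := σ i`, which has two distinct
neighbors `w` and `z`; the other neighbor `x'` of `w` has color `c i`. -/
lemma swapL3 (hn : 2 ≤ n) (i : Fin n)
    (hzero : ∀ z, (SimpleGraph.pathGraph n).Adj (σ i) z → c (σ.symm z) ≠ c i)
    (w z x' : Fin n)
    (hw : (SimpleGraph.pathGraph n).Adj (σ i) w)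
    (hz : (SimpleGraph.pathGraph n).Adj (σ i) z) (hwz : w ≠ z)
    (hx : (SimpleGraph.pathGraph n).Adj w x') (hxv : x' ≠ σ i)
    (hxc : c (σ.symm x') = c i) :
    ssgProfitable (SimpleGraph.pathGraph n) c σ i (σ.symm w) := by
  set G := SimpleGraph.pathGraph n with hG
  set j := σ.symm w with hj
  have hσj : σ j = w := σ.apply_symm_apply w
  have hcw : c (σ.symm w) ≠ c i := hzero w hw
  have hcij : c i ≠ c j := fun h => hcw h.symm
  have hxw : x' ≠ w := G.ne_of_adj hx |>.symm
  have hzv : z ≠ σ i := (G.ne_of_adj hz).symm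
  refine ⟨hcij, ?_, ?_⟩
  · -- i improves: old = 0, new > 0 (via x')
    have hold : ssgUtil G c σ i = 0 :=
      util_eq_zero G c σ i (fun t ht => hzero t (G.mem_neighborFinset _ _ |>.1 ht))
    rw [hold]
    set σ' := ssgSwap σ i j with hσ'
    have hσ'i : σ' i = w := by rw [hσ', ssgSwap_apply_i, hσj]
    apply util_pos
    · rw [hσ'i]; exact path_deg_pos hn w
    · refine ⟨x', ?_, ?_⟩
      · rw [hσ'i, SimpleGraph.mem_neighborFinset]; exact hx
      · rw [ssgSwap_symm_apply σ i j x' hxv (by rw [hσj]; exact hxw), hxc]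
  · -- j improves: old = 0, new > 0 (via z)
    have hold : ssgUtil G c σ j = 0 := by
      apply util_eq_zero
      intro t ht
      rw [hσj, SimpleGraph.mem_neighborFinset] at ht
      have : t = σ i ∨ t = x' := path_nbhd_sub (G.adj_symm hw) hx hxv.symm ht
      rcases this with h | h
      · rw [h, Equiv.symm_apply_apply]
        exact fun hci => hcij hci
      · rw [h, hxc]; exact hcij
    rw [hold]
    set σ' := ssgSwap σ i j with hσ'
    have hσ'j : σ' j = σ i := by rw [hσ', ssgSwap_apply_j]
    apply util_pos
    · rw [hσ'j]; exact path_deg_pos hn (σ i)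
    · refine ⟨z, ?_, ?_⟩
      · rw [hσ'j, SimpleGraph.mem_neighborFinset]; exact hz
      · have hzw : z ≠ σ j := by rw [hσj]; exact fun h => hwz (by rw [h])
        rw [ssgSwap_symm_apply σ i j z hzv hzw]
        exact fin2_eq_of_ne (hzero z hz) hcij.symm

end GameLemmas

/-- The combinatorial core: on a path coloring with both colors appearing at
least twice, around any vertex `v` all of whose neighbors are the opposite
color, there is either a "distant swap" witness (C1) or an "adjacent swap"
witness (C2). -/
lemma comb (n : ℕ) (f : ℕ → Fin 2) (x y : Fin 2) (hxy : x ≠ y) (v : ℕ) (hv : v < n)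
    (hfv : f v = x)
    (hnb : ∀ u, u < n → (u + 1 = v ∨ v + 1 = u) → f u = y)
    (hx2 : 2 ≤ ((Finset.range n).filter (fun k => f k = x)).card)
    (hy2 : 2 ≤ ((Finset.range n).filter (fun k => f k = y)).card) :
    (∃ w u, w < n ∧ u < n ∧ f w = y ∧ ¬(w + 1 = v ∨ v + 1 = w) ∧
        (u + 1 = w ∨ w + 1 = u) ∧ f u = x ∧ u ≠ v) ∨
    (1 ≤ v ∧ v + 1 < n ∧ ((2 ≤ v ∧ f (v - 2) = x) ∨ (v + 2 < n ∧ f (v + 2) = x))) := by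
  set X := (Finset.range n).filter (fun k => f k = x) with hX
  set Y := (Finset.range n).filter (fun k => f k = y) with hY
  have memX : ∀ k, k ∈ X ↔ (k < n ∧ f k = x) := by
    intro k; rw [hX, Finset.mem_filter, Finset.mem_range]
  have memY : ∀ k, k ∈ Y ↔ (k < n ∧ f k = y) := by
    intro k; rw [hY, Finset.mem_filter, Finset.mem_range]
  have hvX : v ∈ X := (memX v).2 ⟨hv, hfv⟩
  have hXne : X.Nonempty := ⟨v, hvX⟩
  set M := X.max' hXne with hM
  have hMX : M ∈ X := X.max'_mem hXne
  have hMn : M < n := ((memX M).1 hMX).1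
  have hfM : f M = x := ((memX M).1 hMX).2
  have hMax : ∀ k ∈ X, k ≤ M := fun k hk => X.le_max' k hk
  have hvM : v ≤ M := hMax v hvX
  rcases eq_or_lt_of_le hvM with hveq | hvlt
  · -- Case M = v : all x-vertices ≤ v
    obtain ⟨a, ha, b, hb, hab⟩ := Finset.one_lt_card.1 (by omega : 1 < X.card)
    have hu0 : ∃ u0, u0 ∈ X ∧ u0 < v := by
      rcases eq_or_ne a v with h | h
      · exact ⟨b, hb, lt_of_le_of_ne (hveq ▸ hMax b hb) (fun hh => hab (by rw [h, hh]))⟩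
      · exact ⟨a, ha, lt_of_le_of_ne (hveq ▸ hMax a ha) h⟩
    obtain ⟨u0, hu0X, hu0v⟩ := hu0
    set m := X.min' hXne with hm
    have hmX : m ∈ X := X.min'_mem hXne
    have hmn : m < n := ((memX m).1 hmX).1
    have hfm : f m = x := ((memX m).1 hmX).2
    have hmin : ∀ k ∈ X, m ≤ k := fun k hk => X.min'_le k hk
    have hmv : m < v := lt_of_le_of_lt (hmin u0 hu0X) hu0v
    have hv1 : 1 ≤ v := by omega
    have hfvm1 : f (v - 1) = y := hnb (v - 1) (by omega) (Or.inl (by omega))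
    have hmne : m ≠ v - 1 := fun h => hxy (by rw [← hfm, h, hfvm1])
    have hm2 : m + 2 ≤ v := by omega
    by_cases hm0 : m = 0
    · -- minimum-of-Y analysis
      have hYne : Y.Nonempty := ⟨v - 1, (memY _).2 ⟨by omega, hfvm1⟩⟩
      set s := Y.min' hYne with hs
      have hsY : s ∈ Y := Y.min'_mem hYne
      have hsn : s < n := ((memY s).1 hsY).1
      have hfs : f s = y := ((memY s).1 hsY).2
      have hsmin : ∀ k ∈ Y, s ≤ k := fun k hk => Y.min'_le k hk
      have hsv : s ≤ v - 1 := hsmin (v - 1) ((memY _).2 ⟨by omega, hfvm1⟩)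
      have hs0 : s ≠ 0 := fun h => hxy (by rw [← hfm, hm0, ← h, hfs])
      have hfs1 : f (s - 1) = x := by
        refine fin2_opp hxy.symm (fun h => ?_)
        have : s ≤ s - 1 := hsmin (s - 1) ((memY _).2 ⟨by omega, h⟩)
        omega
      rcases eq_or_lt_of_le hsv with hseq | hslt
      · -- s = v - 1 : C2 with left witness
        right
        have hv2 : 2 ≤ v := by omega
        have hfv2 : f (v - 2) = x := by
          refine fin2_opp hxy.symm (fun h => ?_)
          have : s ≤ v - 2 := hsmin (v - 2) ((memY _).2 ⟨by omega, h⟩)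
          omega
        refine ⟨hv1, ?_, Or.inl ⟨hv2, hfv2⟩⟩
        by_contra hcon
        have hvn1 : v = n - 1 := by omega
        obtain ⟨a', ha', b', hb', hab'⟩ := Finset.one_lt_card.1 (by omega : 1 < Y.card)
        have hae : a' = v - 1 := by
          have h1 := hsmin a' ha'
          have h2 := ((memY a').1 ha').1
          have h3 := ((memY a').1 ha').2
          have : a' ≠ v := fun h => hxy (by rw [← hfv, ← h, h3])
          omega
        have hbe : b' = v - 1 := by
          have h1 := hsmin b' hb'
          have h2 := ((memY b').1 hb').1
          have h3 := ((memY b').1 hb').2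
          have : b' ≠ v := fun h => hxy (by rw [← hfv, ← h, h3])
          omega
        exact hab' (hae.trans hbe.symm)
      · -- s ≤ v - 2 : C1 with w = s, u = s - 1
        left
        exact ⟨s, s - 1, hsn, by omega, hfs, by omega, Or.inl (by omega), hfs1, by omega⟩
    · -- m ≥ 1 : C1 with w = m - 1, u = m
      left
      have hfm1 : f (m - 1) = y := by
        refine fin2_opp hxy (fun h => ?_)
        have : m ≤ m - 1 := hmin (m - 1) ((memX _).2 ⟨by omega, h⟩)
        omega
      exact ⟨m - 1, m, by omega, hmn, hfm1, by omega, Or.inr (by omega), hfm, by omega⟩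
  · -- Case v < M
    have hv1n : v + 1 < n := by
      have : v + 1 ≤ M := hvlt
      omega
    have hfv1 : f (v + 1) = y := hnb (v + 1) hv1n (Or.inr rfl)
    have hMne : M ≠ v + 1 := fun h => hxy (by rw [← hfM, h, hfv1])
    have hM2 : v + 2 ≤ M := by omega
    by_cases hMn1 : M + 1 < n
    · -- C1 with w = M + 1, u = M
      left
      have hfM1 : f (M + 1) = y := by
        refine fin2_opp hxy (fun h => ?_)
        have : M + 1 ≤ M := hMax (M + 1) ((memX _).2 ⟨hMn1, h⟩)
        omega
      exact ⟨M + 1, M, hMn1, hMn, hfM1, by omega, Or.inl rfl, hfM, by omega⟩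
    · -- M = n - 1 ; maximum-of-Y analysis
      have hYne : Y.Nonempty := ⟨v + 1, (memY _).2 ⟨hv1n, hfv1⟩⟩
      set s := Y.max' hYne with hs
      have hsY : s ∈ Y := Y.max'_mem hYne
      have hsn : s < n := ((memY s).1 hsY).1
      have hfs : f s = y := ((memY s).1 hsY).2
      have hsmax : ∀ k ∈ Y, k ≤ s := fun k hk => Y.le_max' k hk
      have hsv : v + 1 ≤ s := hsmax (v + 1) ((memY _).2 ⟨hv1n, hfv1⟩)
      have hsM : s ≠ M := fun h => hxy (by rw [← hfs, h, hfM])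
      have hs1n : s + 1 < n := by omega
      have hfs1 : f (s + 1) = x := by
        refine fin2_opp hxy.symm (fun h => ?_)
        have : s + 1 ≤ s := hsmax (s + 1) ((memY _).2 ⟨hs1n, h⟩)
        omega
      rcases eq_or_lt_of_le hsv with hseq | hslt
      · -- s = v + 1 : C2 with right witness
        right
        have hfv2 : f (v + 2) = x := by
          refine fin2_opp hxy.symm (fun h => ?_)
          have : v + 2 ≤ s := hsmax (v + 2) ((memY _).2 ⟨by omega, h⟩)
          omega
        refine ⟨?_, hv1n, Or.inr ⟨by omega, hfv2⟩⟩
        by_contra hcon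
        have hv0 : v = 0 := by omega
        obtain ⟨a', ha', b', hb', hab'⟩ := Finset.one_lt_card.1 (by omega : 1 < Y.card)
        have hae : a' = 1 := by
          have h1 := hsmax a' ha'
          have h3 := ((memY a').1 ha').2
          have : a' ≠ 0 := fun h => hxy (by rw [← hfv, hv0, ← h, h3])
          omega
        have hbe : b' = 1 := by
          have h1 := hsmax b' hb'
          have h3 := ((memY b').1 hb').2
          have : b' ≠ 0 := fun h => hxy (by rw [← hfv, hv0, ← h, h3])
          omega
        exact hab' (hae.trans hbe.symm)
      · -- s ≥ v + 2 : C1 with w = s, u = s + 1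
        left
        exact ⟨s, s + 1, hsn, hs1n, hfs, by omega, Or.inr rfl, hfs1, by omega⟩

lemma count_transfer {n : ℕ} (c : Fin n → Fin 2) (σ : Fin n ≃ Fin n)
    (f : ℕ → Fin 2) (hf : ∀ p : Fin n, f p.val = c (σ.symm p)) (t : Fin 2) :
    ((Finset.range n).filter (fun k => f k = t)).card
      = (Finset.univ.filter (fun q : Fin n => c q = t)).card := by
  have h1 : (Finset.univ.filter (fun p : Fin n => c (σ.symm p) = t)).card
      = ((Finset.range n).filter (fun k => f k = t)).card := by
    apply Finset.card_bij (fun (p : Fin n) _ => (p : ℕ))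
    · intro p hp
      rw [Finset.mem_filter, Finset.mem_range]
      exact ⟨p.isLt, by rw [hf p]; exact (Finset.mem_filter.1 hp).2⟩
    · intro p _ q _ h
      exact Fin.ext h
    · intro k hk
      rw [Finset.mem_filter, Finset.mem_range] at hk
      refine ⟨⟨k, hk.1⟩, ?_, rfl⟩
      rw [Finset.mem_filter]
      exact ⟨Finset.mem_univ _, by rw [← hf ⟨k, hk.1⟩]; exact hk.2⟩
  rw [← h1]
  apply Finset.card_equiv σ.symm
  intro q
  simp

theorem stmt16 (n o b : ℕ) (hn : 3 < n)
    (c : Fin n → Fin 2)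
    (ho : o = (Finset.univ.filter (fun i : Fin n => c i = 0)).card)
    (hb : b = (Finset.univ.filter (fun i : Fin n => c i = 1)).card)
    (ho2 : 2 ≤ o) (hb2 : 2 ≤ b)
    (σ : Fin n ≃ Fin n) (heq : ssgEquilibrium (SimpleGraph.pathGraph n) c σ) :
    ∀ i : Fin n, 0 < ssgUtil (SimpleGraph.pathGraph n) c σ i := by
  intro i
  by_contra hpos
  have hn2 : 2 ≤ n := by omega
  have hd : 0 < (SimpleGraph.pathGraph n).degree (σ i) := path_deg_pos hn2 (σ i)
  have hzero : ∀ z, (SimpleGraph.pathGraph n).Adj (σ i) z → c (σ.symm z) ≠ c i := by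
    intro z hz hcz
    exact hpos (util_pos (SimpleGraph.pathGraph n) c σ i hd
      ⟨z, ((SimpleGraph.pathGraph n).mem_neighborFinset _ _).2 hz, hcz⟩)
  -- set up the ℕ-valued coloring
  set f : ℕ → Fin 2 := fun k => if h : k < n then c (σ.symm ⟨k, h⟩) else 0 with hf
  have hfval : ∀ p : Fin n, f p.val = c (σ.symm p) := by
    intro p
    rw [hf]
    simp only [p.isLt, dif_pos, Fin.eta]
  set x := c i with hx
  set y := x + 1 with hy
  have hxy : x ≠ y := by omega
  have hopp : ∀ a : Fin 2, a ≠ x → a = y := fun a ha => fin2_opp hxy ha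
  set v := (σ i).val with hv
  have hfv : f v = x := by rw [hv, hfval (σ i), Equiv.symm_apply_apply]
  have hnb : ∀ u, u < n → (u + 1 = v ∨ v + 1 = u) → f u = y := by
    intro u hu hadj
    have hA : (SimpleGraph.pathGraph n).Adj (σ i) ⟨u, hu⟩ := by
      rw [SimpleGraph.pathGraph_adj]
      simp only [Fin.val_mk]
      omega
    have := hzero _ hA
    rw [← hfval ⟨u, hu⟩] at this
    exact hopp _ this
  have hcx : 2 ≤ ((Finset.range n).filter (fun k => f k = x)).card := by
    rw [count_transfer c σ f hfval x]
    have : x = 0 ∨ x = 1 := by omega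
    rcases this with h | h
    · rw [h, ← ho]; exact ho2
    · rw [h, ← hb]; exact hb2
  have hcy : 2 ≤ ((Finset.range n).filter (fun k => f k = y)).card := by
    rw [count_transfer c σ f hfval y]
    have : y = 0 ∨ y = 1 := by omega
    rcases this with h | h
    · rw [h, ← ho]; exact ho2
    · rw [h, ← hb]; exact hb2
  rcases comb n f x y hxy v (σ i).isLt hfv hnb hcx hcy with
    ⟨w, u, hwn, hun, hfw, hnadj, hadjwu, hfu, huv⟩ | ⟨hv1, hv1n, hside⟩
  · -- C1 : apply swapL1
    refine heq i (σ.symm ⟨w, hwn⟩) (swapL1 c σ hn2 i hzero ⟨w, hwn⟩ ⟨u, hun⟩ ?_ ?_ ?_ ?_ ?_)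
    · rw [← hfval ⟨w, hwn⟩, hfw]; exact hxy.symm
    · rw [SimpleGraph.pathGraph_adj]; simp only [Fin.val_mk]; omega
    · rw [SimpleGraph.pathGraph_adj]; simp only [Fin.val_mk]; omega
    · rw [← hfval ⟨u, hun⟩]; exact hfu
    · exact Fin.ne_of_val_ne (by simp only [Fin.val_mk]; omega)
  · -- C2 : apply swapL3
    rcases hside with ⟨hv2, hfv2⟩ | ⟨hv2n, hfv2⟩
    · -- left witness : w = v-1, z = v+1, x' = v-2
      refine heq i (σ.symm ⟨v - 1, by omega⟩)
        (swapL3 c σ hn2 i hzero ⟨v - 1, by omega⟩ ⟨v + 1, by omega⟩ ⟨v - 2, by omega⟩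
          ?_ ?_ ?_ ?_ ?_ ?_)
      · exact SimpleGraph.pathGraph_adj.mpr (by simp only [Fin.val_mk]; first | omega | exact Or.inl trivial | exact Or.inr trivial)
      · exact SimpleGraph.pathGraph_adj.mpr (by simp only [Fin.val_mk]; first | omega | exact Or.inl trivial | exact Or.inr trivial)
      · exact Fin.ne_of_val_ne (by simp only [Fin.val_mk]; omega)
      · exact SimpleGraph.pathGraph_adj.mpr (by simp only [Fin.val_mk]; first | omega | exact Or.inl trivial | exact Or.inr trivial)
      · exact Fin.ne_of_val_ne (by simp only [Fin.val_mk]; omega)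
      · rw [← hfval]; exact hfv2
    · -- right witness : w = v+1, z = v-1, x' = v+2
      refine heq i (σ.symm ⟨v + 1, by omega⟩)
        (swapL3 c σ hn2 i hzero ⟨v + 1, by omega⟩ ⟨v - 1, by omega⟩ ⟨v + 2, by omega⟩
          ?_ ?_ ?_ ?_ ?_ ?_)
      · exact SimpleGraph.pathGraph_adj.mpr (by simp only [Fin.val_mk]; first | omega | exact Or.inl trivial | exact Or.inr trivial)
      · exact SimpleGraph.pathGraph_adj.mpr (by simp only [Fin.val_mk]; first | omega | exact Or.inl trivial | exact Or.inr trivial)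
      · exact Fin.ne_of_val_ne (by simp only [Fin.val_mk]; omega)
      · exact SimpleGraph.pathGraph_adj.mpr (by simp only [Fin.val_mk]; first | omega | exact Or.inl trivial | exact Or.inr trivial)
      · exact Fin.ne_of_val_ne (by simp only [Fin.val_mk]; omega)
      · rw [← hfval]; exact hfv2
end

section
/- In a 2-type Swap Schelling Game on a 4-neighbor grid, any strategy profile in which every agent on a corner or middle vertex has utility at least 1/2 and every agent on a border vertex has utility at least 2/3 is a swap equilibrium. -/
/-!
On a grid with both sides at least 2 every vertex has degree 2, 3 or 4, so the hypotheses give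
every agent utility at least 1/2. In any graph, an agent `i` swapping with an agent `j` of the
other colour lands on `j`'s vertex, where at most a `1 - u_j` fraction of the neighbours share
`i`'s colour (the vertex `i` vacates is now held by `j`). Hence `i`'s new utility is at most
`1 - u_j ≤ 1/2 ≤ u_i`, and `i` cannot strictly gain.
-/

open SimpleGraph Finset
open scoped Classical

def grid4 (l h : ℕ) : SimpleGraph (Fin l × Fin h) where
  Adj p q := Nat.dist p.1.val q.1.val + Nat.dist p.2.val q.2.val = 1
  symm := by
    constructor
    intro p q hpq
    rwa [Nat.dist_comm p.1.val, Nat.dist_comm p.2.val] at hpq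
  loopless := by constructor; intro p hp; simp [Nat.dist_self] at hp

instance (l h : ℕ) : DecidableRel (grid4 l h).Adj :=
  fun p q => inferInstanceAs (Decidable
    (Nat.dist p.1.val q.1.val + Nat.dist p.2.val q.2.val = 1))
section SwapBound

variable {V A : Type*} [Fintype V] [DecidableEq V] (G : SimpleGraph V) [DecidableRel G.Adj]
  {k : ℕ} (c : A → Fin k) (σ : A ≃ V)

lemma ssgUtil_swap_add_ssgUtil_le_one {i j : A} (hc : c i ≠ c j) :
    ssgUtil G c (ssgSwap σ i j) i + ssgUtil G c σ j ≤ 1 := by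
  have hmove : ssgSwap σ i j i = σ j := by simp [ssgSwap]
  set N := G.neighborFinset (σ j)
  set S := N.filter fun v => c ((ssgSwap σ i j).symm v) = c i
  set T := N.filter fun v => c (σ.symm v) = c j
  have hdisj : Disjoint S T := by
    refine disjoint_left.mpr fun v hv hv' => ?_
    rw [mem_filter] at hv hv'
    simp only [ssgSwap, Equiv.symm_trans_apply, Equiv.symm_swap] at hv
    have hvj : v ≠ σ j := fun h => G.notMem_neighborFinset_self _ (h ▸ hv.1)
    by_cases hvi : v = σ i
    · subst hvi
      simp only [Equiv.swap_apply_left, Equiv.symm_apply_apply] at hv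
      exact hc hv.2.symm
    · rw [Equiv.swap_apply_of_ne_of_ne hvi hvj] at hv
      exact hc (hv.2.symm.trans hv'.2)
  have hcard : #S + #T ≤ #N :=
    card_union_of_disjoint hdisj ▸
      card_le_card (union_subset (filter_subset _ _) (filter_subset _ _))
  rw [ssgUtil, ssgUtil, hmove, ← add_div, ← card_neighborFinset_eq_degree]
  exact div_le_one_of_le₀ (by exact_mod_cast hcard) (Nat.cast_nonneg _)

theorem ssgEquilibrium_of_forall_half_le_ssgUtil
    (hσ : ∀ i, (1 : ℚ) / 2 ≤ ssgUtil G c σ i) : ssgEquilibrium G c σ := by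
  rintro i j ⟨hc, hi, -⟩
  linarith [ssgUtil_swap_add_ssgUtil_le_one G c σ hc, hσ i, hσ j]

end SwapBound

lemma degree_pathGraph_le_two (n : ℕ) (u : Fin n) : (pathGraph n).degree u ≤ 2 := by
  rw [← card_neighborFinset_eq_degree]
  calc #((pathGraph n).neighborFinset u) ≤ #({u.val - 1, u.val + 1} : Finset ℕ) :=
        card_le_card_of_injOn Fin.val
          (fun v hv => by simp only [coe_insert, coe_singleton, Set.mem_insert_iff,
            Set.mem_singleton_iff, mem_coe, mem_neighborFinset, pathGraph_adj] at hv ⊢; omega)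
          Fin.val_injective.injOn
    _ ≤ 2 := card_le_two

lemma one_le_degree_pathGraph {n : ℕ} (hn : 2 ≤ n) (u : Fin n) : 1 ≤ (pathGraph n).degree u :=
  haveI := Fin.nontrivial_iff_two_le.mpr hn
  (pathGraph_preconnected n).degree_pos_of_nontrivial u

lemma grid4_eq_boxProd (l h : ℕ) : grid4 l h = pathGraph l □ pathGraph h := by
  ext p q
  simp only [grid4, boxProd_adj, pathGraph_adj, Nat.dist, Fin.ext_iff]
  omega

lemma degree_grid4 (l h : ℕ) (v : Fin l × Fin h) :
    (grid4 l h).degree v = (pathGraph l).degree v.1 + (pathGraph h).degree v.2 := by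
  rw [← degree_boxProd, ← card_neighborFinset_eq_degree, ← card_neighborFinset_eq_degree]
  congr 1
  ext w
  simp only [mem_neighborFinset, grid4_eq_boxProd]

lemma degree_grid4_eq_two_or_three_or_four {l h : ℕ} (hl : 2 ≤ l) (hh : 2 ≤ h)
    (v : Fin l × Fin h) :
    (grid4 l h).degree v = 2 ∨ (grid4 l h).degree v = 3 ∨ (grid4 l h).degree v = 4 := by
  have := degree_pathGraph_le_two l v.1
  have := degree_pathGraph_le_two h v.2
  have := one_le_degree_pathGraph hl v.1
  have := one_le_degree_pathGraph hh v.2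
  rw [degree_grid4]
  omega

theorem stmt17 (l h : ℕ) (hl : 2 ≤ l) (hh : 2 ≤ h)
    (c : Fin l × Fin h → Fin 2) (σ : (Fin l × Fin h) ≃ (Fin l × Fin h))
    (hcorner : ∀ i, (grid4 l h).degree (σ i) = 2 →
      (1 : ℚ) / 2 ≤ ssgUtil (grid4 l h) c σ i)
    (hmiddle : ∀ i, (grid4 l h).degree (σ i) = 4 →
      (1 : ℚ) / 2 ≤ ssgUtil (grid4 l h) c σ i)
    (hborder : ∀ i, (grid4 l h).degree (σ i) = 3 →
      (2 : ℚ) / 3 ≤ ssgUtil (grid4 l h) c σ i) :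
    ssgEquilibrium (grid4 l h) c σ := by
  refine ssgEquilibrium_of_forall_half_le_ssgUtil _ _ _ fun i => ?_
  rcases degree_grid4_eq_two_or_three_or_four hl hh (σ i) with hd | hd | hd
  · exact hcorner i hd
  · linarith [hborder i hd]
  · exact hmiddle i hd
end
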